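/- arXiv:2408.14406 — 2 statements merged into one kernel-verified Lean document; each statement's English description precedes it below -/
import Mathlib

section
/- Let G be a weighted digraph with no negative cycles, and let C, D ⊆ V. Suppose H ⊆ V and a family of paths {π'_{s,t}} ⊆ G − D satisfy: (a) δ_{G−D}(s,t) ≤ ℓ(π'_{s,t}) ≤ δ^h_{G−(C∪D)}(s,t) for all s,t; (b) whenever |V(π'_{s,t})| ≥ h, H intersects V(π'_{s,t}). If a, b ∈ V are such that every shortest a→b path in G has more than h hops and avoids C ∪ D, then some shortest a→b path in G passes through a vertex of H. -/
/-- A walk in a digraph with edge relation `E`, from `s` to `t`, given as its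
(nonempty) list of vertices. -/
def IsWalk {V : Type*} (E : V → V → Prop) (s t : V) (P : List V) : Prop :=
  P ≠ [] ∧ P.head? = some s ∧ P.getLast? = some t ∧ P.Chain' E

/-- The length (total weight) of a walk given by its vertex list. -/
noncomputable def pathLen {V : Type*} (w : V → V → ℝ) (P : List V) : ℝ :=
  ((P.zip P.tail).map fun e => w e.1 e.2).sum

/-- `distK E w k s t` : minimum length of an `s → t` walk with at most `k` hops (edges);
`⊤` if no such walk exists. -/
noncomputable def distK {V : Type*} (E : V → V → Prop) (w : V → V → ℝ) (k : ℕ)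
    (s t : V) : EReal :=
  sInf {x : EReal | ∃ P : List V, IsWalk E s t P ∧ P.length ≤ k + 1 ∧ x = (pathLen w P : EReal)}

/-- `dist' E w s t` : the `s,t`-distance, the infimum of lengths of all `s → t` walks. -/
noncomputable def dist' {V : Type*} (E : V → V → Prop) (w : V → V → ℝ) (s t : V) : EReal :=
  sInf {x : EReal | ∃ P : List V, IsWalk E s t P ∧ x = (pathLen w P : EReal)}

/-- `G` has a negative-weight cycle (a nontrivial closed walk of negative total weight). -/
def HasNegCycle {V : Type*} (E : V → V → Prop) (w : V → V → ℝ) : Prop :=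
  ∃ v : V, ∃ P : List V, IsWalk E v v P ∧ 2 ≤ P.length ∧ pathLen w P < 0

/-- `G − S` : remove all edges incident to vertices of `S`. -/
def delV {V : Type*} (E : V → V → Prop) (S : Set V) : V → V → Prop :=
  fun u v => E u v ∧ u ∉ S ∧ v ∉ S

/-- A digraph is acyclic if its only closed walks are the trivial one-vertex walks. -/
def Acyclic' {V : Type*} (E : V → V → Prop) : Prop :=
  ∀ v : V, ∀ P : List V, IsWalk E v v P → P.length = 1

/-!
Among the shortest `a → b` walks pick one, `Q`, with the fewest vertices, and split it after `h`
hops at a vertex `c` as `Q = R ++ S`. The prefix `R` has at most `h` hops and avoids `C ∪ D`, so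
`δ^h_{G−(C∪D)}(a, c)` is finite and `π'_{a,c}` is no longer than `R`; hence `π'_{a,c} ++ S` is
again a shortest `a → b` walk. If `π'_{a,c}` had fewer than `h` distinct vertices, removing its
(nonnegative) cycles would give a shortest `a → b` walk with fewer vertices than `Q`. So `H` meets
`π'_{a,c}` by (b), hence the shortest walk `π'_{a,c} ++ S`.
-/

theorem List.Duplicate.exists_eq_append {α : Type*} {x : α} {l : List α}
    (h : List.Duplicate x l) :
    ∃ l₁ l₂ l₃, l = l₁ ++ x :: (l₂ ++ x :: l₃) := by
  induction h with
  | cons_mem hm =>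
    obtain ⟨l₂, l₃, rfl⟩ := List.append_of_mem hm
    exact ⟨[], l₂, l₃, rfl⟩
  | cons_duplicate _ ih =>
    obtain ⟨l₁, l₂, l₃, rfl⟩ := ih
    exact ⟨_ :: l₁, l₂, l₃, rfl⟩

section Walks

variable {V : Type*} {E : V → V → Prop} {w : V → V → ℝ} {s t x : V} {A B P : List V}

theorem pathLen_append_cons (w : V → V → ℝ) (A B : List V) (x : V) :
    pathLen w (A ++ x :: B) = pathLen w (A ++ [x]) + pathLen w (x :: B) := by
  induction A with
  | nil => simp [pathLen]
  | cons a A ih =>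
    cases A with
    | nil => simp [pathLen]
    | cons b A => simp_all [pathLen]; ring

theorem isWalk_iff :
    IsWalk E s t P ↔ P ≠ [] ∧ P.head? = some s ∧ P.getLast? = some t ∧ P.IsChain E :=
  Iff.rfl

theorem isWalk_append_cons_iff :
    IsWalk E s t (A ++ x :: B) ↔ IsWalk E s x (A ++ [x]) ∧ IsWalk E x t (x :: B) := by
  rw [isWalk_iff, isWalk_iff, isWalk_iff, List.isChain_split]
  simp only [ne_eq, List.append_eq_nil_iff, reduceCtorEq, and_false, not_false_eq_true,
    List.head?_append, List.head?_cons, Option.or_some, Option.some.injEq, List.getLast?_append,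
    List.getLast?_cons, Option.some_or, true_and, List.cons_ne_self, List.getLast?_nil,
    Option.getD_none]
  tauto

theorem IsWalk.dropLast_append (hP : IsWalk E s t P) : P.dropLast ++ [t] = P :=
  List.dropLast_append_getLast? t hP.2.2.1

theorem IsWalk.append (hA : IsWalk E s x A) (hB : IsWalk E x t (x :: B)) :
    IsWalk E s t (A ++ B) := by
  rw [← hA.dropLast_append, List.append_assoc, List.singleton_append, isWalk_append_cons_iff,
    hA.dropLast_append]
  exact ⟨hA, hB⟩

theorem IsWalk.pathLen_append (hA : IsWalk E s x A) (w : V → V → ℝ) (B : List V) :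
    pathLen w (A ++ B) = pathLen w A + pathLen w (x :: B) := by
  rw [← hA.dropLast_append, List.append_assoc, List.singleton_append, pathLen_append_cons,
    hA.dropLast_append]

theorem IsWalk.mono {E' : V → V → Prop} (hE : ∀ u v, E u v → E' u v) (hP : IsWalk E s t P) :
    IsWalk E' s t P :=
  ⟨hP.1, hP.2.1, hP.2.2.1, hP.2.2.2.imp hE⟩

theorem IsWalk.delV {S : Set V} (hP : IsWalk E s t P) (hS : ∀ v ∈ P, v ∉ S) :
    IsWalk (delV E S) s t P :=
  ⟨hP.1, hP.2.1, hP.2.2.1,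
    hP.2.2.2.imp_of_mem_imp fun _ _ hu hv huv => ⟨huv, hS _ hu, hS _ hv⟩⟩

theorem IsWalk.exists_nodup {P : List V} (hneg : ¬ HasNegCycle E w) (hP : IsWalk E s t P) :
    ∃ P', IsWalk E s t P' ∧ P'.Nodup ∧ pathLen w P' ≤ pathLen w P ∧ P' ⊆ P := by
  by_cases hnd : P.Nodup
  · exact ⟨P, hP, hnd, le_rfl, List.Subset.refl P⟩
  obtain ⟨x, hx⟩ := List.exists_duplicate_iff_not_nodup.mpr hnd
  obtain ⟨l₁, l₂, l₃, rfl⟩ := hx.exists_eq_append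
  obtain ⟨hpre, hrest⟩ := isWalk_append_cons_iff.mp hP
  rw [← List.cons_append, isWalk_append_cons_iff] at hrest
  obtain ⟨hcycle, hsuf⟩ := hrest
  have hcycle_nonneg : 0 ≤ pathLen w (x :: l₂ ++ [x]) :=
    not_lt.mp fun hlt => hneg ⟨x, _, hcycle, by simp, hlt⟩
  have hshort : IsWalk E s t (l₁ ++ x :: l₃) := isWalk_append_cons_iff.mpr ⟨hpre, hsuf⟩
  obtain ⟨P', hP', hnd', hle, hsub⟩ := hshort.exists_nodup hneg
  refine ⟨P', hP', hnd', ?_, List.Subset.trans hsub fun v => ?_⟩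
  · rw [pathLen_append_cons] at hle ⊢
    rw [← List.cons_append, pathLen_append_cons w (x :: l₂) l₃ x]
    linarith
  · simp only [List.mem_append, List.mem_cons]
    tauto
termination_by P.length
decreasing_by subst_vars; simp

theorem IsWalk.exists_length_le_card_toFinset [DecidableEq V] (hneg : ¬ HasNegCycle E w)
    (hP : IsWalk E s t P) :
    ∃ P', IsWalk E s t P' ∧ pathLen w P' ≤ pathLen w P ∧ P'.length ≤ P.toFinset.card := by
  obtain ⟨P', hP', hnd, hle, hsub⟩ := hP.exists_nodup hneg
  refine ⟨P', hP', hle, ?_⟩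
  rw [← List.toFinset_card_of_nodup hnd]
  exact Finset.card_le_card fun v hv => List.mem_toFinset.mpr (hsub (List.mem_toFinset.mp hv))

theorem dist'_le_pathLen (hP : IsWalk E s t P) : dist' E w s t ≤ pathLen w P :=
  sInf_le ⟨P, hP, rfl⟩

theorem distK_le_pathLen {k : ℕ} (hP : IsWalk E s t P) (hk : P.length ≤ k + 1) :
    distK E w k s t ≤ pathLen w P :=
  sInf_le ⟨P, hP, hk, rfl⟩

def IsShortestWalk (E : V → V → Prop) (w : V → V → ℝ) (s t : V) (P : List V) : Prop :=
  IsWalk E s t P ∧ (pathLen w P : EReal) = dist' E w s t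

theorem IsShortestWalk.replace_prefix {R S : List V} (hQ : IsShortestWalk E w s t (R ++ x :: S))
    (hA : IsWalk E s x A) (hAR : pathLen w A ≤ pathLen w (R ++ [x])) :
    IsShortestWalk E w s t (A ++ S) := by
  obtain ⟨hQwalk, hQlen⟩ := hQ
  have hS : IsWalk E x t (x :: S) := (isWalk_append_cons_iff.mp hQwalk).2
  have hwalk : IsWalk E s t (A ++ S) := hA.append hS
  refine ⟨hwalk, le_antisymm ?_ (dist'_le_pathLen hwalk)⟩
  rw [← hQlen, EReal.coe_le_coe_iff, hA.pathLen_append, pathLen_append_cons]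
  linarith

end Walks

theorem stmt11_general {V : Type*} [DecidableEq V]
    (E : V → V → Prop) (w : V → V → ℝ) (hneg : ¬ HasNegCycle E w)
    (C D : Set V) (h : ℕ) (H : Set V) (π' : V → V → List V)
    (hvalid : ∀ s t, distK (delV E (C ∪ D)) w h s t ≠ ⊤ →
      IsWalk (delV E D) s t (π' s t))
    (ha : ∀ s t, distK (delV E (C ∪ D)) w h s t ≠ ⊤ →
      dist' (delV E D) w s t ≤ (pathLen w (π' s t) : EReal) ∧
      (pathLen w (π' s t) : EReal) ≤ distK (delV E (C ∪ D)) w h s t)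
    (hb : ∀ s t, distK (delV E (C ∪ D)) w h s t ≠ ⊤ →
      h ≤ (π' s t).toFinset.card → ∃ x ∈ H, x ∈ π' s t)
    (a b : V)
    (hex : ∃ P : List V, IsWalk E a b P ∧ (pathLen w P : EReal) = dist' E w a b)
    (hab : ∀ P : List V, IsWalk E a b P → (pathLen w P : EReal) = dist' E w a b →
      h + 1 < P.length ∧ ∀ v ∈ P, v ∉ C ∪ D) :
    ∃ P : List V, IsWalk E a b P ∧ (pathLen w P : EReal) = dist' E w a b ∧
      ∃ x ∈ H, x ∈ P := by
  obtain ⟨Q, hQ, hQmin⟩ :=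
    (measure List.length).wf.has_min {P | IsShortestWalk E w a b P} hex
  obtain ⟨hhops, havoid⟩ := hab Q hQ.1 hQ.2
  obtain ⟨R, c, S, rfl, hR⟩ : ∃ R c S, Q = R ++ c :: S ∧ R.length = h :=
    ⟨Q.take h, Q[h], Q.drop (h + 1), by simp, by simp only [List.length_take]; omega⟩
  have hRwalk : IsWalk (delV E (C ∪ D)) a c (R ++ [c]) :=
    (isWalk_append_cons_iff.mp hQ.1).1.delV fun v hv =>
      havoid v (by simp only [List.mem_append, List.mem_cons] at hv ⊢; tauto)
  have hdistK : distK (delV E (C ∪ D)) w h a c ≤ pathLen w (R ++ [c]) :=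
    distK_le_pathLen hRwalk (by simp [hR])
  have hfin : distK (delV E (C ∪ D)) w h a c ≠ ⊤ :=
    ne_top_of_le_ne_top (EReal.coe_ne_top _) hdistK
  have hπ : IsWalk E a c (π' a c) := (hvalid a c hfin).mono fun _ _ huv => huv.1
  have hπR : pathLen w (π' a c) ≤ pathLen w (R ++ [c]) :=
    EReal.coe_le_coe_iff.mp ((ha a c hfin).2.trans hdistK)
  have hnew : IsShortestWalk E w a b (π' a c ++ S) := hQ.replace_prefix hπ hπR
  refine ⟨π' a c ++ S, hnew.1, hnew.2, ?_⟩
  suffices hcard : h ≤ (π' a c).toFinset.card by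
    obtain ⟨x, hxH, hx⟩ := hb a c hfin hcard
    exact ⟨x, hxH, List.mem_append_left S hx⟩
  by_contra! hcard
  obtain ⟨P, hP, hPπ, hPcard⟩ := hπ.exists_length_le_card_toFinset hneg
  refine hQmin _ (hQ.replace_prefix hP (hPπ.trans hπR)) (show (P ++ S).length < _ from ?_)
  simp only [List.length_append, List.length_cons]
  omega

/-- Let `G` be a finite weighted digraph with no negative cycles,
`C, D ⊆ V`, and suppose `H ⊆ V` and a family of paths `π'_{s,t} ⊆ G − D` satisfy:
(a) `δ_{G−D}(s,t) ≤ ℓ(π'_{s,t}) ≤ δ^h_{G−(C∪D)}(s,t)` for all `s,t` (whenever the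
right-hand side is finite, in which case `π'_{s,t}` is a genuine `s → t` walk in
`G − D`), and (b) whenever `π'_{s,t}` has at least `h` distinct vertices, `H`
intersects it. If every shortest `a → b` path in `G` has more than `h` hops and
avoids `C ∪ D` (and some shortest `a → b` path exists), then some shortest `a → b`
path in `G` passes through a vertex of `H`. -/
theorem stmt11 {V : Type*} [Fintype V] [DecidableEq V]
    (E : V → V → Prop) (w : V → V → ℝ) (hneg : ¬ HasNegCycle E w)
    (C D : Set V) (h : ℕ) (H : Set V) (π' : V → V → List V)
    (hvalid : ∀ s t, distK (delV E (C ∪ D)) w h s t ≠ ⊤ →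
      IsWalk (delV E D) s t (π' s t))
    (ha : ∀ s t, distK (delV E (C ∪ D)) w h s t ≠ ⊤ →
      dist' (delV E D) w s t ≤ (pathLen w (π' s t) : EReal) ∧
      (pathLen w (π' s t) : EReal) ≤ distK (delV E (C ∪ D)) w h s t)
    (hb : ∀ s t, distK (delV E (C ∪ D)) w h s t ≠ ⊤ →
      h ≤ (π' s t).toFinset.card → ∃ x ∈ H, x ∈ π' s t)
    (a b : V)
    (hex : ∃ P : List V, IsWalk E a b P ∧ (pathLen w P : EReal) = dist' E w a b)
    (hab : ∀ P : List V, IsWalk E a b P → (pathLen w P : EReal) = dist' E w a b →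
      h + 1 < P.length ∧ ∀ v ∈ P, v ∉ C ∪ D) :
    ∃ P : List V, IsWalk E a b P ∧ (pathLen w P : EReal) = dist' E w a b ∧
      ∃ x ∈ H, x ∈ P :=
  stmt11_general E w hneg C D h H π' hvalid ha hb a b hex hab
end

section
/- Let G be a weighted digraph with nonnegative weights, C ⊆ V, and let centers c₁,…,c_ℓ be chosen so that C ⊆ {c₁,…,c_ℓ}. Suppose that for each i and every s,t, values y_i = δ^{2h}_{G−(D∪{c₁,…,c_{i−1}})}(s,c_i) + δ^{2h}_{G−(D∪{c₁,…,c_{i−1}})}(c_i,t) are available and each y_i is the length of an actual s→t path in G − D. Then min_{i=1}^ℓ y_i ≤ min_{c ∈ C} { δ^h_{G−D}(s,c) + δ^h_{G−D}(c,t) }. -/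
-- helpers
lemma pathLen_single {V : Type*} (w : V → V → ℝ) (v : V) : pathLen w [v] = 0 := by
  simp [pathLen]

lemma pathLen_cons {V : Type*} (w : V → V → ℝ) (a b : V) (l : List V) :
    pathLen w (a :: b :: l) = w a b + pathLen w (b :: l) := by
  simp [pathLen]

lemma pathLen_split {V : Type*} (w : V → V → ℝ) :
    ∀ (A : List V) (v : V) (B : List V),
      pathLen w (A ++ v :: B) = pathLen w (A ++ [v]) + pathLen w (v :: B) := by
  intro A
  induction A with
  | nil => intro v B; simp [pathLen_single]
  | cons a A ih =>
    intro v B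
    cases A with
    | nil => simp [pathLen_cons, pathLen_single]
    | cons a' A' =>
      have h1 := ih v B
      simp only [List.cons_append] at h1 ⊢
      rw [pathLen_cons, pathLen_cons, h1]
      ring

lemma exists_first_mem {V : Type*} [DecidableEq V] (v : V) :
    ∀ (Q : List V), v ∈ Q → ∃ A B, Q = A ++ v :: B ∧ v ∉ A := by
  intro Q hv
  induction Q with
  | nil => simp at hv
  | cons a Q ih =>
    by_cases hav : a = v
    · exact ⟨[], Q, by simp [hav], by simp⟩
    · have hv' : v ∈ Q := by
        rcases List.mem_cons.1 hv with h | h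
        · exact absurd h.symm hav
        · exact h
      obtain ⟨A, B, hQ, hA⟩ := ih hv'
      refine ⟨a :: A, B, by simp [hQ], ?_⟩
      simp only [List.mem_cons, not_or]
      exact ⟨fun h => hav h.symm, hA⟩


lemma isWalk_split {V : Type*} (E : V → V → Prop) (s t v : V) (A B : List V)
    (hW : IsWalk E s t (A ++ v :: B)) :
    IsWalk E s v (A ++ [v]) ∧ IsWalk E v t (v :: B) := by
  obtain ⟨hne, hh, hl, hc⟩ := hW
  have hpre : (A ++ [v]) <+: (A ++ v :: B) := ⟨B, by simp⟩
  have hsuf : (v :: B) <:+ (A ++ v :: B) := ⟨A, rfl⟩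
  refine ⟨⟨by simp, ?_, ?_, hc.prefix hpre⟩, ⟨by simp, rfl, ?_, hc.suffix hsuf⟩⟩
  · cases A with
    | nil => simpa using hh
    | cons a A => simpa using hh
  · rw [List.getLast?_append_of_ne_nil _ (by simp : ([v]:List V) ≠ [])]
    rfl
  · rw [List.getLast?_append_cons] at hl
    exact hl

lemma isWalk_concat {V : Type*} (E : V → V → Prop) (w : V → V → ℝ) (s c t : V)
    (P1 P2 : List V) (h1 : IsWalk E s c P1) (h2 : IsWalk E c t P2) :
    IsWalk E s t (P1 ++ P2.tail) ∧
      pathLen w (P1 ++ P2.tail) = pathLen w P1 + pathLen w P2 ∧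
      (P1 ++ P2.tail).length + 1 = P1.length + P2.length := by
  obtain ⟨hne1, hh1, hl1, hc1⟩ := h1
  obtain ⟨hne2, hh2, hl2, hc2⟩ := h2
  obtain ⟨B, rfl⟩ : ∃ B, P2 = c :: B := by
    cases P2 with
    | nil => exact absurd rfl hne2
    | cons a B =>
      have ha : a = c := by simpa using hh2
      exact ⟨B, by rw [ha]⟩
  have hA : P1.dropLast ++ [c] = P1 := List.dropLast_append_getLast? c hl1
  simp only [List.tail_cons]
  refine ⟨⟨by simp [hne1], ?_, ?_, ?_⟩, ?_, ?_⟩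
  · rw [List.head?_append_of_ne_nil _ hne1]; exact hh1
  · cases B with
    | nil => simpa using hl1.trans (by simpa using hl2)
    | cons b B' =>
      rw [List.getLast?_append_of_ne_nil _ (by simp)]
      simpa using hl2
  · unfold List.Chain' at hc1 hc2 ⊢
    rw [List.isChain_append]
    refine ⟨hc1, hc2.suffix ⟨[c], rfl⟩, ?_⟩
    intro x hx y hy
    rw [hl1] at hx
    have hx' : c = x := by simpa using hx
    subst hx'
    exact (List.isChain_cons.1 hc2).1 y hy
  · have he : P1 ++ B = P1.dropLast ++ c :: B := by
      conv_lhs => rw [← hA]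
      simp
    rw [he, pathLen_split, hA]
  · simp
    omega

lemma chain'_delV_union {V : Type*} (E : V → V → Prop) (D S : Set V) :
    ∀ Q : List V, List.Chain' (delV E D) Q → (∀ x ∈ Q, x ∉ S) →
      List.Chain' (delV E (D ∪ S)) Q := by
  intro Q
  induction Q with
  | nil => intro _ _; exact List.isChain_nil
  | cons a Q ih =>
    intro hc hS
    unfold List.Chain' at hc ⊢
    rw [List.isChain_cons] at hc ⊢
    refine ⟨?_, ih hc.2 fun x hx => hS x (List.mem_cons_of_mem _ hx)⟩
    intro y hy
    obtain ⟨hE, haD, hyD⟩ := hc.1 y hy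
    refine ⟨hE, ?_, ?_⟩
    · simp only [Set.mem_union, not_or]
      exact ⟨haD, hS a (by simp)⟩
    · simp only [Set.mem_union, not_or]
      exact ⟨hyD, hS y (List.mem_cons_of_mem _ (List.mem_of_mem_head? hy))⟩

lemma distK_le {V : Type*} (E : V → V → Prop) (w : V → V → ℝ) (k : ℕ) (s t : V)
    (P : List V) (hP : IsWalk E s t P) (hlen : P.length ≤ k + 1) :
    distK E w k s t ≤ (pathLen w P : EReal) :=
  sInf_le ⟨P, hP, hlen, rfl⟩

lemma distK_exists {V : Type*} [Fintype V] (E : V → V → Prop) (w : V → V → ℝ)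
    (k : ℕ) (s t : V) (hne : distK E w k s t ≠ ⊤) :
    ∃ P : List V, IsWalk E s t P ∧ P.length ≤ k + 1 ∧
      distK E w k s t = (pathLen w P : EReal) := by
  set A := {x : EReal | ∃ P : List V, IsWalk E s t P ∧ P.length ≤ k + 1 ∧
      x = (pathLen w P : EReal)} with hA
  have hfin : A.Finite := by
    have hsub : A ⊆ (fun P : List V => ((pathLen w P : ℝ) : EReal)) ''
        {P : List V | P.length ≤ k + 1} := by
      rintro x ⟨P, _, hl, rfl⟩
      exact ⟨P, hl, rfl⟩
    exact ((List.finite_length_le V (k + 1)).image _).subset hsub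
  have hAne : A.Nonempty := by
    by_contra hcon
    rw [Set.not_nonempty_iff_eq_empty] at hcon
    exact hne (by rw [distK, ← hA, hcon, sInf_empty])
  have := hAne.csInf_mem hfin
  rw [hA] at this
  obtain ⟨P, hP, hl, he⟩ := this
  exact ⟨P, hP, hl, he⟩

lemma distK_ne_bot {V : Type*} [Fintype V] (E : V → V → Prop) (w : V → V → ℝ)
    (k : ℕ) (s t : V) : distK E w k s t ≠ ⊥ := by
  by_cases h : distK E w k s t = ⊤
  · simp [h]
  · obtain ⟨P, _, _, he⟩ := distK_exists E w k s t h
    simp [he]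


/-- Centers lemma. `G` has nonnegative weights; the centers
`c₁, …, c_ℓ` (given as `cs : Fin ℓ → V`) cover `C`. For fixed `s, t`, suppose
`y i = δ^{2h}_{G−(D∪{c₁,…,c_{i−1}})}(s, cᵢ) + δ^{2h}_{G−(D∪{c₁,…,c_{i−1}})}(cᵢ, t)`
for each `i`, each finite `y i` being the length of an actual `s → t` path in
`G − D`. Then `min_i y i ≤ min_{c ∈ C} (δ^h_{G−D}(s,c) + δ^h_{G−D}(c,t))`. -/
theorem stmt19 {V : Type*} [Fintype V] [DecidableEq V]
    (E : V → V → Prop) (w : V → V → ℝ) (hw : ∀ u v, E u v → 0 ≤ w u v)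
    (C D : Set V) (h ℓ : ℕ) (cs : Fin ℓ → V) (hC : C ⊆ Set.range cs)
    (s t : V) (y : Fin ℓ → EReal)
    (hy : ∀ i, y i =
        distK (delV E (D ∪ cs '' {j | j < i})) w (2 * h) s (cs i)
      + distK (delV E (D ∪ cs '' {j | j < i})) w (2 * h) (cs i) t)
    (hpath : ∀ i, y i ≠ ⊤ →
      ∃ P : List V, IsWalk (delV E D) s t P ∧ (pathLen w P : EReal) = y i) :
    ∀ c ∈ C, (⨅ i, y i) ≤ distK (delV E D) w h s c + distK (delV E D) w h c t := by
  classical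
  intro c hc
  by_cases hT1 : distK (delV E D) w h s c = ⊤
  · rw [hT1, EReal.top_add_of_ne_bot (distK_ne_bot _ _ _ _ _)]
    exact le_top
  by_cases hT2 : distK (delV E D) w h c t = ⊤
  · rw [hT2, EReal.add_top_of_ne_bot (distK_ne_bot _ _ _ _ _)]
    exact le_top
  obtain ⟨P1, hW1, hl1, he1⟩ := distK_exists _ w h s c hT1
  obtain ⟨P2, hW2, hl2, he2⟩ := distK_exists _ w h c t hT2
  obtain ⟨hWQ, hLen, hcard⟩ := isWalk_concat _ w s c t P1 P2 hW1 hW2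
  set Q := P1 ++ P2.tail with hQdef
  have hQlen : Q.length ≤ 2 * h + 1 := by omega
  have hcQ : c ∈ Q := by
    have : c ∈ P1 := List.mem_of_mem_getLast? (by rw [hW1.2.2.1]; rfl)
    exact List.mem_append_left _ this
  have hex : ∃ j : Fin ℓ, cs j ∈ Q := by
    obtain ⟨j, hj⟩ := hC hc
    exact ⟨j, hj ▸ hcQ⟩
  let F : Finset (Fin ℓ) := Finset.univ.filter (fun j => cs j ∈ Q)
  have hFne : F.Nonempty := ⟨hex.choose, by simp [F, hex.choose_spec]⟩
  set j := F.min' hFne with hjdef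
  have hjQ : cs j ∈ Q := by
    have := F.min'_mem hFne
    simpa [F] using this
  have hmin : ∀ j' : Fin ℓ, j' < j → cs j' ∉ Q := fun j' hlt hmem =>
    absurd (F.min'_le j' (by simp [F, hmem])) (not_le.2 hlt)
  have havoid : ∀ x ∈ Q, x ∉ cs '' {j' : Fin ℓ | j' < j} := by
    rintro x hx ⟨j', hj', rfl⟩
    exact hmin j' hj' hx
  have hWQ' : IsWalk (delV E (D ∪ cs '' {j' : Fin ℓ | j' < j})) s t Q := by
    obtain ⟨a, b, c', d⟩ := hWQ
    exact ⟨a, b, c', chain'_delV_union E D _ Q d havoid⟩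
  obtain ⟨A, B, hQeq, _⟩ := exists_first_mem (cs j) Q hjQ
  rw [hQeq] at hWQ'
  obtain ⟨hWs, hWt⟩ := isWalk_split _ s t (cs j) A B hWQ'
  have hQtot : Q.length = A.length + B.length + 1 := by
    rw [hQeq]; simp; omega
  have hlen1 : (A ++ [cs j]).length ≤ 2 * h + 1 := by
    simp only [List.length_append, List.length_cons, List.length_nil] at *
    omega
  have hlen2 : (cs j :: B).length ≤ 2 * h + 1 := by
    simp only [List.length_cons] at *
    omega
  have d1 := distK_le _ w (2 * h) s (cs j) _ hWs hlen1
  have d2 := distK_le _ w (2 * h) (cs j) t _ hWt hlen2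
  have hyj : y j ≤ (pathLen w Q : EReal) := by
    rw [hy j]
    calc distK (delV E (D ∪ cs '' {j' | j' < j})) w (2 * h) s (cs j)
          + distK (delV E (D ∪ cs '' {j' | j' < j})) w (2 * h) (cs j) t
        ≤ ((pathLen w (A ++ [cs j]) : EReal) + (pathLen w (cs j :: B) : EReal)) :=
          add_le_add d1 d2
      _ = (pathLen w Q : EReal) := by
          rw [hQeq]
          conv_rhs => rw [pathLen_split]
          rw [EReal.coe_add]
  refine le_trans (iInf_le _ j) (le_trans hyj ?_)
  rw [he1, he2, ← EReal.coe_add, hLen]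
end
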